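/- arXiv:2604.02589 — 2 statements merged into one kernel-verified Lean document; each statement's English description precedes it below -/
import Mathlib

section
/- Suppose n > 0, c : ℕ → ℕ takes only odd values, k is a natural number and t is a binary string of length less than n such that (p_k)^⌢t^⌢(0) and (p_k)^⌢t^⌢(1) are vertices of L^c_n. Then these two vertices are an odd distance apart in the path L^c_n. -/
open MeasureTheory

/-- A walk of length `m` in the graph given by the relation `Adj`. -/
def IsWalk {α : Type*} (Adj : α → α → Prop) (m : ℕ) (w : ℕ → α) : Prop :=
  ∀ j, j < m → Adj (w j) (w (j + 1))

/-- The set of lengths of walks from `u` to `v`. -/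
def walkLens {α : Type*} (Adj : α → α → Prop) (u v : α) : Set ℕ :=
  {m | ∃ w : ℕ → α, w 0 = u ∧ w m = v ∧ IsWalk Adj m w}

/-- `Φ(A,k)`: every odd-length walk in `G` with both endpoints in `A`
has length at most `2k - 1`. -/
def PhiProp {X : Type*} (G : X → X → Prop) (A : Set X) (k : ℕ) : Prop :=
  ∀ (m : ℕ) (w : ℕ → X), Odd m → IsWalk G m w → w 0 ∈ A → w m ∈ A → m ≤ 2 * k - 1

/-- The endpoint `e_i^n = (p_0)^⌢(0)^{n-1}⌢(i)` of the finite path `L^c_n`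
(vertices of `L^c_n` are coded as lists of naturals, the head being the
index `k` of `p_k` and the tail being a binary string). -/
def pathEnd : ℕ → ℕ → List ℕ
  | 0, _ => [0]
  | m + 1, i => 0 :: (List.replicate m 0 ++ [i])

/-- The vertex set of the finite path `L^c_n`. -/
def LVerts (c : ℕ → ℕ) : ℕ → Set (List ℕ)
  | 0 => {[0]}
  | n + 1 =>
      ((fun v => v ++ [0]) '' LVerts c n) ∪ ((fun v => v ++ [1]) '' LVerts c n) ∪
        {v | ∃ k ≤ c n, v = [k]}

/-- The edge set of the finite path `L^c_n` (as a set of ordered pairs,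
one orientation for each edge): `L^c_{n+1}` consists of two relabelled copies
of `L^c_n` joined by the path `(e_1^n)^⌢(0), p_0, …, p_{c(n)}, (e_1^n)^⌢(1)`. -/
def LEdges (c : ℕ → ℕ) : ℕ → Set (List ℕ × List ℕ)
  | 0 => ∅
  | n + 1 =>
      {e | ∃ u v, (u, v) ∈ LEdges c n ∧ ∃ i ≤ 1, e = (u ++ [i], v ++ [i])} ∪
      {(pathEnd n 1 ++ [0], [0]), ([c n], pathEnd n 1 ++ [1])} ∪
      {e | ∃ j, j < c n ∧ e = ([j], [j + 1])}

/-- The (symmetric) adjacency relation of `L^c_n`. -/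
def LAdj (c : ℕ → ℕ) (n : ℕ) (u v : List ℕ) : Prop :=
  (u, v) ∈ LEdges c n ∨ (v, u) ∈ LEdges c n

/-! The graph `L^c_n` is connected, since every vertex is joined to the endpoint `e_0^n`; and
it is bipartite with respect to the colouring `v ↦ v.sum + [v.length = n]` (mod 2) as soon as
every `c i` is odd. The two vertices `(p_k)^⌢t^⌢(0)` and `(p_k)^⌢t^⌢(1)` have different colours,
so every walk between them, in particular a shortest one, has odd length. -/

open Relation

section Walks

variable {α : Type*} {Adj : α → α → Prop}

theorem walkLens_nonempty_of_reflTransGen {u v : α} (h : ReflTransGen Adj u v) :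
    (walkLens Adj u v).Nonempty := by
  induction h with
  | refl => exact ⟨0, fun _ => u, rfl, rfl, fun j hj => absurd hj j.not_lt_zero⟩
  | @tail _ y _ hxy ih =>
    obtain ⟨m, w, hw0, hwm, hw⟩ := ih
    refine ⟨m + 1, Function.update w (m + 1) y, by simpa using hw0, by simp, fun j hj => ?_⟩
    rcases Nat.lt_succ_iff_lt_or_eq.mp hj with hj | rfl
    · simpa [Function.update_of_ne (by omega : j ≠ m + 1),
        Function.update_of_ne (by omega : j + 1 ≠ m + 1)] using hw j hj
    · simpa [hwm] using hxy

theorem odd_of_mem_walkLens {χ : α → ZMod 2} (hχ : ∀ a b, Adj a b → χ b = χ a + 1) {u v : α}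
    (huv : χ v = χ u + 1) {m : ℕ} (hm : m ∈ walkLens Adj u v) : Odd m := by
  obtain ⟨w, rfl, rfl, hw⟩ := hm
  have hcolor : ∀ j ≤ m, χ (w j) = χ (w 0) + j := by
    intro j hj
    induction j with
    | zero => simp
    | succ j ih =>
      rw [hχ _ _ (hw j hj), ih (by omega)]
      push_cast
      ring
  rw [hcolor m le_rfl, add_right_inj] at huv
  exact ZMod.natCast_eq_one_iff_odd.mp huv

end Walks

section Connected

variable (c : ℕ → ℕ)

instance (n : ℕ) : Std.Symm (LAdj c n) := ⟨fun _ _ h => h.symm⟩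

theorem pathEnd_succ (n i : ℕ) : pathEnd (n + 1) i = pathEnd n 0 ++ [i] := by
  cases n <;> simp [pathEnd, List.replicate_succ']

theorem pathEnd_mem_LVerts (n : ℕ) {i : ℕ} (hi : i ≤ 1) : pathEnd n i ∈ LVerts c n := by
  induction n generalizing i with
  | zero => rfl
  | succ n ih =>
    rw [pathEnd_succ]
    interval_cases i
    · exact Or.inl (Or.inl ⟨_, ih zero_le_one, rfl⟩)
    · exact Or.inl (Or.inr ⟨_, ih zero_le_one, rfl⟩)

theorem reflTransGen_LAdj_append {n i : ℕ} (hi : i ≤ 1) {u v : List ℕ}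
    (h : ReflTransGen (LAdj c n) u v) : ReflTransGen (LAdj c (n + 1)) (u ++ [i]) (v ++ [i]) :=
  h.lift (· ++ [i]) fun _ _ huv => huv.imp (fun h => Or.inl (Or.inl ⟨_, _, h, i, hi, rfl⟩))
    (fun h => Or.inl (Or.inl ⟨_, _, h, i, hi, rfl⟩))

theorem reflTransGen_LAdj_singleton (n : ℕ) {k : ℕ} (hk : k ≤ c n) :
    ReflTransGen (LAdj c (n + 1)) [0] [k] := by
  induction k with
  | zero => exact .refl
  | succ k ih => exact (ih (by omega)).tail (Or.inl (Or.inr ⟨k, by omega, rfl⟩))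

theorem reflTransGen_pathEnd_zero (n : ℕ) {v : List ℕ} (hv : v ∈ LVerts c n) :
    ReflTransGen (LAdj c n) v (pathEnd n 0) := by
  induction n generalizing v with
  | zero => exact hv ▸ .refl
  | succ n ih =>
    have hzero : ReflTransGen (LAdj c (n + 1)) [0] (pathEnd (n + 1) 0) := by
      rw [pathEnd_succ]
      exact .head (Or.inr (Or.inl (Or.inr (Set.mem_insert _ _))))
        (reflTransGen_LAdj_append c zero_le_one (ih (pathEnd_mem_LVerts c n le_rfl)))
    rcases hv with (⟨u, hu, rfl⟩ | ⟨u, hu, rfl⟩) | ⟨j, hj, rfl⟩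
    · rw [pathEnd_succ]
      exact reflTransGen_LAdj_append c zero_le_one (ih hu)
    · have hue : ReflTransGen (LAdj c n) u (pathEnd n 1) :=
        (ih hu).trans (symm (ih (pathEnd_mem_LVerts c n le_rfl)))
      refine (reflTransGen_LAdj_append c le_rfl hue).trans (.head (b := [c n]) ?_ ?_)
      · exact Or.inr (Or.inl (Or.inr (Set.mem_insert_of_mem _ rfl)))
      · exact (symm (reflTransGen_LAdj_singleton c n le_rfl)).trans hzero
    · exact (symm (reflTransGen_LAdj_singleton c n hj)).trans hzero

end Connected

/-- The vertices of length `n` in `L^c_n` are those that descend from a `p_k` added in passing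
from `L^c_0` to `L^c_1`; their colour is shifted because the endpoint `e_1^0 = p_0` of `L^c_0`,
unlike `e_1^m` for `m > 0`, has digit sum `0`. -/
def parityColor (n : ℕ) (v : List ℕ) : ZMod 2 :=
  v.sum + if v.length = n then 1 else 0

theorem parityColor_succ_append (n : ℕ) (u : List ℕ) (i : ℕ) :
    parityColor (n + 1) (u ++ [i]) = parityColor n u + i := by
  simp only [parityColor, List.sum_append, List.sum_singleton, List.length_append,
    List.length_singleton, Nat.add_right_cancel_iff, Nat.cast_add]
  ring

theorem parityColor_succ_singleton (n k : ℕ) :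
    parityColor (n + 1) [k] = k + if n = 0 then 1 else 0 := by
  simp [parityColor]

theorem parityColor_pathEnd_one (n : ℕ) :
    parityColor n (pathEnd n 1) = if n = 0 then 0 else 1 := by
  cases n <;> simp [parityColor, pathEnd]

theorem parityColor_of_mem_LEdges {c : ℕ → ℕ} (hodd : ∀ i, Odd (c i)) {n : ℕ} {u v : List ℕ}
    (h : (u, v) ∈ LEdges c n) : parityColor n v = parityColor n u + 1 := by
  induction n generalizing u v with
  | zero => exact absurd h (Set.notMem_empty _)
  | succ n ih =>
    rcases h with (⟨a, b, hab, i, -, heq⟩ | hjoin) | ⟨j, -, heq⟩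
    · obtain ⟨rfl, rfl⟩ := Prod.mk.inj heq
      rw [parityColor_succ_append, parityColor_succ_append, ih hab]
      ring
    · have hc : (c n : ZMod 2) = 1 := ZMod.natCast_eq_one_iff_odd.mpr (hodd n)
      rcases hjoin with heq | heq <;> obtain ⟨rfl, rfl⟩ := Prod.mk.inj heq <;>
        simp only [parityColor_succ_append, parityColor_succ_singleton, parityColor_pathEnd_one,
          hc] <;> split_ifs <;> decide
    · obtain ⟨rfl, rfl⟩ := Prod.mk.inj heq
      rw [parityColor_succ_singleton, parityColor_succ_singleton]
      push_cast
      ring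

theorem parityColor_of_LAdj {c : ℕ → ℕ} (hodd : ∀ i, Odd (c i)) {n : ℕ} {u v : List ℕ}
    (h : LAdj c n u v) : parityColor n v = parityColor n u + 1 := by
  rcases h with h | h
  · exact parityColor_of_mem_LEdges hodd h
  · rw [parityColor_of_mem_LEdges hodd h, add_assoc, show (1 + 1 : ZMod 2) = 0 from rfl, add_zero]

theorem stmt9_general (c : ℕ → ℕ) (hodd : ∀ i, Odd (c i)) (n k : ℕ)
    (t : List ℕ)
    (h0 : (k :: (t ++ [0])) ∈ LVerts c n) (h1 : (k :: (t ++ [1])) ∈ LVerts c n) :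
    (walkLens (LAdj c n) (k :: (t ++ [0])) (k :: (t ++ [1]))).Nonempty ∧
    Odd (sInf (walkLens (LAdj c n) (k :: (t ++ [0])) (k :: (t ++ [1])))) := by
  have hconn : (walkLens (LAdj c n) (k :: (t ++ [0])) (k :: (t ++ [1]))).Nonempty :=
    walkLens_nonempty_of_reflTransGen <| (reflTransGen_pathEnd_zero c n h0).trans
      (symm (reflTransGen_pathEnd_zero c n h1))
  have hcolor : parityColor n (k :: (t ++ [1])) = parityColor n (k :: (t ++ [0])) + 1 := by
    simp only [parityColor, List.sum_cons, List.sum_append, List.length_cons, List.length_append]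
    push_cast
    ring
  exact ⟨hconn, odd_of_mem_walkLens (χ := parityColor n) (fun _ _ => parityColor_of_LAdj hodd)
    hcolor (Nat.sInf_mem hconn)⟩

/-- If `n > 0`, `c` takes only odd values, and `(p_k)^⌢t^⌢(0)` and
`(p_k)^⌢t^⌢(1)` are vertices of `L^c_n` (with `t` a binary string of length
less than `n`), then these two vertices are an odd distance apart in the
path `L^c_n`. -/
theorem stmt9 (c : ℕ → ℕ) (hodd : ∀ i, Odd (c i)) (n k : ℕ) (hn : 0 < n)
    (t : List ℕ) (htbin : ∀ a ∈ t, a ≤ 1) (htlen : t.length < n)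
    (h0 : (k :: (t ++ [0])) ∈ LVerts c n) (h1 : (k :: (t ++ [1])) ∈ LVerts c n) :
    (walkLens (LAdj c n) (k :: (t ++ [0])) (k :: (t ++ [1]))).Nonempty ∧
    Odd (sInf (walkLens (LAdj c n) (k :: (t ++ [0])) (k :: (t ++ [1])))) :=
  stmt9_general c hodd n k t h0 h1
end

section
/- Let c : ℕ → ℕ. Two vertices (n_0,k_0,x_0) and (n_1,k_1,x_1) of X_c are in the same connected component of 𝕃_c if and only if there are finite binary strings t_0, t_1 and x ∈ 2^ℕ such that |t_0| − |t_1| = n_1 − n_0 and x_i = t_i^⌢x for both i < 2. -/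
/-!
An edge of `L^c_{n+1}` between two vertices of length at least two is a copy of an edge of
`L^c_n`, so it preserves the last letter. Hence adjacent vertices of `𝕃_c` carry sequences that
agree after discarding `max - n_i` letters from the `i`-th one, and this relation is transitive.
Conversely, the path `p_0, …, p_{c(m)}` and the edge from `p_0` down to `e_1^m ⌢ (0)` connect every
vertex to one of level `0`; by the first part it remains to connect two level-`0` vertices whose
sequences agree from some position `a` on, which is done by induction on `a`.
-/

open MeasureTheory

/-- The Polish space `X_c ⊆ ℕ × ℕ × 2^ℕ` of vertices of `𝕃_c`. -/
def Xc (c : ℕ → ℕ) : Set (ℕ × ℕ × (ℕ → Bool)) :=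
  {p | (p.1 = 0 ∧ p.2.1 = 0) ∨ (1 ≤ p.1 ∧ p.2.1 ≤ c (p.1 - 1))}

/-- `π_n(m,k,x) = (p_k)^⌢(x↾(n-m))`, a vertex of `L^c_n` (for `n ≥ m`). -/
def piProj (m k : ℕ) (x : ℕ → Bool) (n : ℕ) : List ℕ :=
  k :: List.ofFn (fun j : Fin (n - m) => cond (x j.val) 1 0)

/-- Adjacency in `𝕃_c`: the projections are adjacent in `L^c_n` for every
`n ≥ max` of the first coordinates. -/
def LcAdj (c : ℕ → ℕ) (p q : ℕ × ℕ × (ℕ → Bool)) : Prop :=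
  ∀ n, max p.1 q.1 ≤ n → LAdj c n (piProj p.1 p.2.1 p.2.2 n) (piProj q.1 q.2.1 q.2.2 n)

/-- Concatenation `t^⌢x` of a finite binary string with an infinite one. -/
def catSeq (t : List Bool) (x : ℕ → Bool) : ℕ → Bool :=
  fun j => if h : j < t.length then t.get ⟨j, h⟩ else x (j - t.length)

section Sequences

lemma catSeq_of_lt {t : List Bool} {x : ℕ → Bool} {j : ℕ} (h : j < t.length) :
    catSeq t x j = t[j] := dif_pos h

lemma catSeq_length_add (t : List Bool) (x : ℕ → Bool) (j : ℕ) :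
    catSeq t x (t.length + j) = x j := by
  simp [catSeq]

def ShiftTailEq {α : Type*} (x y : ℕ → α) (d : ℤ) : Prop :=
  ∃ a b : ℕ, (a : ℤ) - b = d ∧ ∀ j, x (a + j) = y (b + j)

namespace ShiftTailEq

variable {α : Type*} {x y z : ℕ → α} {d e : ℤ}

lemma refl (x : ℕ → α) : ShiftTailEq x x 0 := ⟨0, 0, rfl, fun _ => rfl⟩

lemma symm (h : ShiftTailEq x y d) : ShiftTailEq y x (-d) := by
  obtain ⟨a, b, hab, h⟩ := h
  exact ⟨b, a, by omega, fun j => (h j).symm⟩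

lemma trans (h₁ : ShiftTailEq x y d) (h₂ : ShiftTailEq y z e) : ShiftTailEq x z (d + e) := by
  obtain ⟨a, b, hab, h₁⟩ := h₁
  obtain ⟨a', b', hab', h₂⟩ := h₂
  refine ⟨a + a', b' + b, by omega, fun j => ?_⟩
  calc x (a + a' + j) = y (b + (a' + j)) := by rw [← h₁, Nat.add_assoc]
    _ = y (a' + (b + j)) := by rw [Nat.add_left_comm]
    _ = z (b' + b + j) := by rw [h₂, Nat.add_assoc]

end ShiftTailEq

lemma exists_catSeq_iff_shiftTailEq (x₀ x₁ : ℕ → Bool) (d : ℤ) :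
    (∃ (t₀ t₁ : List Bool) (x : ℕ → Bool),
        (t₀.length : ℤ) - t₁.length = d ∧ x₀ = catSeq t₀ x ∧ x₁ = catSeq t₁ x) ↔
      ShiftTailEq x₀ x₁ d := by
  constructor
  · rintro ⟨t₀, t₁, x, hd, rfl, rfl⟩
    exact ⟨t₀.length, t₁.length, hd, fun j => by rw [catSeq_length_add, catSeq_length_add]⟩
  · rintro ⟨a, b, hd, h⟩
    have prefix_cat : ∀ (y : ℕ → Bool) (n : ℕ),
        y = catSeq (List.ofFn fun j : Fin n => y j) (fun j => y (n + j)) := by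
      intro y n
      funext j
      by_cases hj : j < n
      · rw [catSeq_of_lt (by simpa using hj)]
        simp
      · simp [catSeq, hj, Nat.add_sub_cancel' (not_lt.mp hj)]
    refine ⟨List.ofFn fun j : Fin a => x₀ j, List.ofFn fun j : Fin b => x₁ j,
      fun j => x₀ (a + j), by simpa using hd, prefix_cat x₀ a, ?_⟩
    simp_rw [h]
    exact prefix_cat x₁ b

end Sequences

section FinitePaths

variable {c : ℕ → ℕ}

lemma piProj_self (m k : ℕ) (x : ℕ → Bool) : piProj m k x m = [k] := by
  simp [piProj]

lemma piProj_length (m k : ℕ) (x : ℕ → Bool) (n : ℕ) :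
    (piProj m k x n).length = n - m + 1 := by
  simp [piProj]

lemma piProj_succ {m n : ℕ} (h : m ≤ n) (k : ℕ) (x : ℕ → Bool) :
    piProj m k x (n + 1) = piProj m k x n ++ [cond (x (n - m)) 1 0] := by
  simp only [piProj, Nat.sub_add_comm h, List.ofFn_succ_last, List.cons_append]
  rfl

lemma piProj_zero_catSeq (t : List Bool) (x : ℕ → Bool) :
    piProj 0 0 (catSeq t x) t.length = 0 :: t.map fun b => cond b 1 0 := by
  simp only [piProj, Nat.sub_zero, List.cons.injEq, true_and]
  rw [← List.ofFn_getElem_eq_map]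
  exact congrArg _ (funext fun j => by rw [catSeq_of_lt j.isLt])

lemma LAdj.append_singleton {n : ℕ} {u v : List ℕ} (h : LAdj c n u v) {i : ℕ} (hi : i ≤ 1) :
    LAdj c (n + 1) (u ++ [i]) (v ++ [i]) :=
  h.imp (fun h => Or.inl (Or.inl ⟨u, v, h, i, hi, rfl⟩))
    (fun h => Or.inl (Or.inl ⟨v, u, h, i, hi, rfl⟩))

/-- The only edges of `L^c_{n+1}` between vertices of length at least two are copies of edges
of `L^c_n`. -/
lemma getLast?_eq_of_mem_LEdges {n : ℕ} {u v : List ℕ} (h : (u, v) ∈ LEdges c n)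
    (hu : 2 ≤ u.length) (hv : 2 ≤ v.length) : u.getLast? = v.getLast? := by
  cases n with
  | zero => exact h.elim
  | succ n =>
    rcases h with (⟨u', v', -, i, -, he⟩ | he | he) | ⟨j, -, he⟩
    all_goals
      simp only [Set.mem_singleton_iff, Prod.mk.injEq] at he
      obtain ⟨rfl, rfl⟩ := he
    · simp
    · simp at hv
    · simp at hu
    · simp at hu

lemma LAdj.getLast?_eq {n : ℕ} {u v : List ℕ} (h : LAdj c n u v)
    (hu : 2 ≤ u.length) (hv : 2 ≤ v.length) : u.getLast? = v.getLast? :=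
  h.elim (fun h => getLast?_eq_of_mem_LEdges h hu hv)
    (fun h => (getLast?_eq_of_mem_LEdges h hv hu).symm)

end FinitePaths

section InfiniteGraph

variable {c : ℕ → ℕ}

lemma LcAdj.symm {p q : ℕ × ℕ × (ℕ → Bool)} (h : LcAdj c p q) : LcAdj c q p :=
  fun n hn => (h n (max_comm p.1 q.1 ▸ hn)).symm

lemma lcAdj_of_lAdj_max {p q : ℕ × ℕ × (ℕ → Bool)}
    (hadj : LAdj c (max p.1 q.1) (piProj p.1 p.2.1 p.2.2 (max p.1 q.1))
      (piProj q.1 q.2.1 q.2.2 (max p.1 q.1)))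
    (htail : ∀ j, p.2.2 (max p.1 q.1 - p.1 + j) = q.2.2 (max p.1 q.1 - q.1 + j)) :
    LcAdj c p q := by
  intro n hn
  induction n, hn using Nat.le_induction with
  | base => exact hadj
  | succ n hn ih =>
    have hbit : p.2.2 (n - p.1) = q.2.2 (n - q.1) := by
      have h := htail (n - max p.1 q.1)
      rwa [show max p.1 q.1 - p.1 + (n - max p.1 q.1) = n - p.1 by omega,
        show max p.1 q.1 - q.1 + (n - max p.1 q.1) = n - q.1 by omega] at h
    rw [piProj_succ (le_of_max_le_left hn), piProj_succ (le_of_max_le_right hn), hbit]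
    exact ih.append_singleton (Bool.toNat_le _)

lemma LcAdj.shiftTailEq {p q : ℕ × ℕ × (ℕ → Bool)} (h : LcAdj c p q) :
    ShiftTailEq p.2.2 q.2.2 (q.1 - p.1) := by
  set N := max p.1 q.1
  have hp : p.1 ≤ N := le_max_left _ _
  have hq : q.1 ≤ N := le_max_right _ _
  refine ⟨N - p.1, N - q.1, by omega, fun j => ?_⟩
  have hlast := (h (N + j + 1) (by omega)).getLast?_eq
    (by rw [piProj_length]; omega) (by rw [piProj_length]; omega)
  rw [piProj_succ (by omega), piProj_succ (by omega), List.getLast?_concat,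
    List.getLast?_concat, Option.some_inj, Nat.sub_add_comm hp, Nat.sub_add_comm hq] at hlast
  revert hlast
  cases p.2.2 (N - p.1 + j) <;> cases q.2.2 (N - q.1 + j) <;> simp

lemma lcAdj_succ (m : ℕ) {k : ℕ} (hk : k < c m) (x : ℕ → Bool) :
    LcAdj c (m + 1, k, x) (m + 1, k + 1, x) := by
  refine lcAdj_of_lAdj_max ?_ fun _ => rfl
  simp only [max_self, piProj_self]
  exact Or.inl (Or.inr ⟨k, hk, rfl⟩)

/-- The binary string `s` with `e_1^m = (p_0)^⌢s`. -/
def endWord : ℕ → List Bool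
  | 0 => []
  | m + 1 => List.replicate m false ++ [true]

lemma endWord_length (m : ℕ) : (endWord m).length = m := by
  cases m <;> simp [endWord]

lemma pathEnd_one (m : ℕ) : pathEnd m 1 = 0 :: (endWord m).map fun b => cond b 1 0 := by
  cases m <;> simp [pathEnd, endWord]

/-- The new path of `L^c_{m+1}` joins `e_1^m ⌢ (0)` to `p_0` and `p_{c(m)}` to `e_1^m ⌢ (1)`. -/
lemma lcAdj_endWord (m : ℕ) (i : Bool) (x : ℕ → Bool) :
    LcAdj c (0, 0, catSeq (endWord m ++ [i]) x) (m + 1, cond i (c m) 0, x) := by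
  refine lcAdj_of_lAdj_max ?_ fun j => ?_
  · have hlen : (endWord m ++ [i]).length = m + 1 := by simp [endWord_length]
    simp only [Nat.zero_max, piProj_self]
    rw [← hlen, piProj_zero_catSeq, hlen, List.map_append, ← List.cons_append, ← pathEnd_one]
    cases i
    · exact Or.inl (Or.inl (Or.inr (Or.inl rfl)))
    · exact Or.inr (Or.inl (Or.inr (Or.inr rfl)))
  · simpa [endWord_length] using catSeq_length_add (endWord m ++ [i]) x j

end InfiniteGraph

section Connectivity

variable {c : ℕ → ℕ}

def LcEdge (c : ℕ → ℕ) (p q : ℕ × ℕ × (ℕ → Bool)) : Prop :=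
  p ∈ Xc c ∧ q ∈ Xc c ∧ LcAdj c p q

abbrev LcConn (c : ℕ → ℕ) : ℕ × ℕ × (ℕ → Bool) → ℕ × ℕ × (ℕ → Bool) → Prop :=
  Relation.ReflTransGen (LcEdge c)

instance : Std.Symm (LcEdge c) := ⟨fun _ _ h => ⟨h.2.1, h.1, h.2.2.symm⟩⟩

lemma LcConn.symm {p q : ℕ × ℕ × (ℕ → Bool)} (h : LcConn c p q) : LcConn c q p :=
  Std.Symm.symm _ _ h

lemma LcConn.shiftTailEq {p q : ℕ × ℕ × (ℕ → Bool)} (h : LcConn c p q) :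
    ShiftTailEq p.2.2 q.2.2 (q.1 - p.1) := by
  induction h with
  | refl => simpa using ShiftTailEq.refl p.2.2
  | tail _ hedge ih => simpa using ih.trans hedge.2.2.shiftTailEq

lemma zero_mem_Xc (y : ℕ → Bool) : ((0, 0, y) : ℕ × ℕ × (ℕ → Bool)) ∈ Xc c :=
  Or.inl ⟨rfl, rfl⟩

lemma succ_mem_Xc {m k : ℕ} (hk : k ≤ c m) (x : ℕ → Bool) :
    ((m + 1, k, x) : ℕ × ℕ × (ℕ → Bool)) ∈ Xc c :=
  Or.inr ⟨Nat.le_add_left 1 m, by simpa using hk⟩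

lemma lcConn_succ (m : ℕ) (x : ℕ → Bool) :
    ∀ k ≤ c m, LcConn c (m + 1, 0, x) (m + 1, k, x)
  | 0, _ => .refl
  | k + 1, hk => (lcConn_succ m x k (by omega)).tail
      ⟨succ_mem_Xc (by omega) x, succ_mem_Xc hk x, lcAdj_succ m hk x⟩

lemma lcConn_endWord_succ (m : ℕ) (b : Bool) (x : ℕ → Bool) :
    LcConn c (0, 0, catSeq (endWord m ++ [b]) x) (m + 1, 0, x) := by
  have hb : cond b (c m) 0 ≤ c m := by cases b <;> simp
  exact (Relation.ReflTransGen.single ⟨zero_mem_Xc _, succ_mem_Xc hb x,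
    lcAdj_endWord m b x⟩).trans (lcConn_succ m x _ hb).symm

lemma lcConn_endWord (m : ℕ) (i i' : Bool) (x : ℕ → Bool) :
    LcConn c (0, 0, catSeq (endWord m ++ [i]) x) (0, 0, catSeq (endWord m ++ [i']) x) :=
  (lcConn_endWord_succ m i x).trans (lcConn_endWord_succ m i' x).symm

lemma catSeq_endWord_append (y : ℕ → Bool) (a j : ℕ) :
    catSeq (endWord a ++ [y a]) (fun j => y (a + 1 + j)) (a + j) = y (a + j) := by
  have hlen : (endWord a ++ [y a]).length = a + 1 := by simp [endWord_length]
  cases j with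
  | zero => simp [catSeq_of_lt, hlen, List.getElem_append_right, endWord_length]
  | succ j =>
    have h := catSeq_length_add (endWord a ++ [y a]) (fun j => y (a + 1 + j)) j
    rw [hlen] at h
    rwa [show a + (j + 1) = a + 1 + j by omega]

/-- Once the bits before position `a` spell `e_1^a`, the bit at `a` can be switched by passing
through level `a + 1`. -/
lemma lcConn_zero_of_tail_eq (a : ℕ) :
    ∀ y y' : ℕ → Bool, (∀ j, y (a + j) = y' (a + j)) → LcConn c (0, 0, y) (0, 0, y') := by
  induction a with
  | zero =>
    intro y y' h
    obtain rfl : y = y' := funext fun j => by simpa using h j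
    exact .refl
  | succ a ih =>
    intro y y' h
    have htail : (fun j => y' (a + 1 + j)) = fun j => y (a + 1 + j) :=
      funext fun j => (h j).symm
    have hy := ih y _ fun j => (catSeq_endWord_append y a j).symm
    have hy' := ih y' _ fun j => (catSeq_endWord_append y' a j).symm
    rw [htail] at hy'
    exact (hy.trans (lcConn_endWord a (y a) (y' a) _)).trans hy'.symm

lemma exists_lcConn_zero {p : ℕ × ℕ × (ℕ → Bool)} (hp : p ∈ Xc c) :
    ∃ y, LcConn c p (0, 0, y) := by
  obtain ⟨n, k, x⟩ := p
  rcases hp with ⟨rfl, rfl⟩ | ⟨hn, hk⟩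
  · exact ⟨x, .refl⟩
  · obtain ⟨m, rfl⟩ : ∃ m, n = m + 1 := ⟨n - 1, by omega⟩
    exact ⟨_, (lcConn_succ m x k hk).symm.trans (lcConn_endWord_succ m false x).symm⟩

end Connectivity

/-- Two vertices `(n_0,k_0,x_0)` and `(n_1,k_1,x_1)` of `X_c` are in the same
connected component of `𝕃_c` iff there are finite binary strings `t_0, t_1`
and `x ∈ 2^ℕ` with `|t_0| - |t_1| = n_1 - n_0` and `x_i = t_i^⌢x`. -/
theorem stmt13 (c : ℕ → ℕ) (p q : ℕ × ℕ × (ℕ → Bool))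
    (hp : p ∈ Xc c) (hq : q ∈ Xc c) :
    Relation.ReflTransGen
        (fun a b => a ∈ Xc c ∧ b ∈ Xc c ∧ LcAdj c a b) p q ↔
      ∃ (t0 t1 : List Bool) (x : ℕ → Bool),
        (t0.length : ℤ) - (t1.length : ℤ) = (q.1 : ℤ) - (p.1 : ℤ) ∧
        p.2.2 = catSeq t0 x ∧ q.2.2 = catSeq t1 x := by
  rw [exists_catSeq_iff_shiftTailEq]
  refine ⟨LcConn.shiftTailEq, fun h => ?_⟩
  obtain ⟨y, hpy⟩ := exists_lcConn_zero hp
  obtain ⟨y', hqy'⟩ := exists_lcConn_zero hq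
  obtain ⟨a, b, hab, htail⟩ := (hpy.shiftTailEq.symm.trans h).trans hqy'.shiftTailEq
  obtain rfl : a = b := by omega
  exact hpy.trans ((lcConn_zero_of_tail_eq a y y' htail).trans hqy'.symm)
end
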